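/- Let σ : ℝ → Matrix (Fin 2) (Fin 2) ℝ take values in symmetric positive-definite matrices, with inverse σ⁻¹, and suppose σ⁻¹(t) = σ̃⁻¹ + e^{-ε t}·S(t) where S(t) and ∂_t S(t) are bounded and ε > 0. Then σ(t) → σ̃ as t → ∞, and ψ(t) := tr(σ⁻¹·∂_t σ) satisfies |ψ(t)| ≤ C·e^{-ε t} for some constant C and all large t. -/

import Mathlib

attribute [local instance] Matrix.normedAddCommGroup Matrix.normedSpace

/-!
Since `e^{-εt} S(t) → 0`, the inverse metric tends to `σ̃⁻¹`, and continuity of matrix inversion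
gives `σ → σ̃`. Differentiating `σ⁻¹ σ = 1` gives `σ⁻¹ ∂ₜσ = -(∂ₜσ⁻¹) σ`, so
`ψ = -tr((∂ₜσ⁻¹) σ)`. Here `∂ₜσ⁻¹ = e^{-εt} (∂ₜS - ε S)` is `O(e^{-εt})` and `σ` is eventually
bounded, hence `|ψ| = O(e^{-εt})`.
-/

open Filter Topology Real Matrix

namespace Matrix

variable {𝕜 : Type*} [NontriviallyNormedField 𝕜] {l m n : Type*}

theorem _root_.HasDerivAt.matrix_mul [Fintype l] [Fintype m] [Fintype n] {F : 𝕜 → Matrix l m 𝕜}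
    {G : 𝕜 → Matrix m n 𝕜} {F' : Matrix l m 𝕜} {G' : Matrix m n 𝕜} {t : 𝕜}
    (hF : HasDerivAt F F' t) (hG : HasDerivAt G G' t) :
    HasDerivAt (fun s => F s * G s) (F' * G t + F t * G') t := by
  refine hasDerivAt_pi.2 fun i => hasDerivAt_pi.2 fun j => ?_
  simp only [add_apply, mul_apply, ← Finset.sum_add_distrib]
  exact HasDerivAt.fun_sum fun k _ =>
    (hasDerivAt_pi.1 (hasDerivAt_pi.1 hF i) k).mul (hasDerivAt_pi.1 (hasDerivAt_pi.1 hG k) j)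

theorem mul_eq_neg_of_hasDerivAt_of_mul_eq_one [Fintype n] [DecidableEq n]
    {F G : 𝕜 → Matrix n n 𝕜} {F' G' : Matrix n n 𝕜} {t : 𝕜}
    (hF : HasDerivAt F F' t) (hG : HasDerivAt G G' t) (hGF : ∀ s, G s * F s = 1) :
    G t * F' = -(G' * F t) := by
  have hconst : HasDerivAt (fun s => G s * F s) 0 t := by
    rw [funext hGF]
    exact hasDerivAt_const t 1
  exact eq_neg_of_add_eq_zero_right ((hG.matrix_mul hF).unique hconst)

theorem norm_trace_mul_le [Fintype n] (A B : Matrix n n 𝕜) :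
    ‖trace (A * B)‖ ≤ (Fintype.card n : ℝ) ^ 2 * (‖A‖ * ‖B‖) := by
  have hentry : ∀ i j, ‖A i j * B j i‖ ≤ ‖A‖ * ‖B‖ := fun i j => by
    rw [norm_mul]
    exact mul_le_mul (norm_entry_le_entrywise_sup_norm A) (norm_entry_le_entrywise_sup_norm B)
      (norm_nonneg _) (norm_nonneg _)
  calc ‖trace (A * B)‖ = ‖∑ i, ∑ j, A i j * B j i‖ := by simp only [trace, diag, mul_apply]
    _ ≤ ∑ _i : n, ∑ _j : n, ‖A‖ * ‖B‖ :=
      norm_sum_le_of_le _ fun i _ => norm_sum_le_of_le _ fun j _ => hentry i j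
    _ = (Fintype.card n : ℝ) ^ 2 * (‖A‖ * ‖B‖) := by
      simp only [Finset.sum_const, Finset.card_univ, nsmul_eq_mul]; ring

theorem tendsto_of_tendsto_nonsing_inv [Fintype n] [DecidableEq n] {α : Type*} {f : Filter α}
    {σ : α → Matrix n n 𝕜} {A : Matrix n n 𝕜} (hA : IsUnit A.det) (hσ : ∀ t, IsUnit (σ t).det)
    (h : Tendsto (fun t => (σ t)⁻¹) f (𝓝 A⁻¹)) : Tendsto σ f (𝓝 A) := by
  have hcont : ContinuousAt Inv.inv A⁻¹ := by
    refine continuousAt_matrix_inv _ ?_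
    rw [Ring.inverse_eq_inv']
    exact continuousAt_inv₀ (isUnit_nonsing_inv_det A hA).ne_zero
  rw [← nonsing_inv_nonsing_inv A hA]
  exact (hcont.tendsto.comp h).congr fun t => nonsing_inv_nonsing_inv _ (hσ t)

end Matrix

section ExponentialDecay

variable {E : Type*} [NormedAddCommGroup E] [NormedSpace ℝ E] {ε B : ℝ} {S : ℝ → E}

theorem tendsto_exp_neg_mul_smul_of_bounded (hε : 0 < ε) (hS : ∀ t, ‖S t‖ ≤ B) :
    Tendsto (fun t => exp (-ε * t) • S t) atTop (𝓝 0) := by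
  have hexp : Tendsto (fun t => exp (-ε * t)) atTop (𝓝 0) :=
    tendsto_exp_atBot.comp (tendsto_id.const_mul_atTop_of_neg (neg_neg_iff_pos.mpr hε))
  refine squeeze_zero_norm (fun t => ?_) (zero_mul B ▸ hexp.mul_const B)
  rw [norm_smul, norm_of_nonneg (exp_pos _).le]
  exact mul_le_mul_of_nonneg_left (hS t) (exp_pos _).le

theorem hasDerivAt_exp_neg_mul_smul {S' : E} {t : ℝ} (hS : HasDerivAt S S' t) :
    HasDerivAt (fun s => exp (-ε * s) • S s) (exp (-ε * t) • (S' - ε • S t)) t := by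
  have hexp : HasDerivAt (fun s => exp (-ε * s)) (exp (-ε * t) * -ε) t := by
    simpa using ((hasDerivAt_id t).const_mul (-ε)).exp
  convert hexp.fun_smul hS using 1
  rw [smul_sub, smul_smul, mul_neg, neg_smul, sub_eq_add_neg, add_comm]

theorem norm_exp_neg_mul_smul_sub_le (hε : 0 ≤ ε) {S' : E} {t : ℝ} (hS' : ‖S'‖ ≤ B)
    (hS : ‖S t‖ ≤ B) : ‖exp (-ε * t) • (S' - ε • S t)‖ ≤ (1 + ε) * B * exp (-ε * t) := by
  calc ‖exp (-ε * t) • (S' - ε • S t)‖ ≤ exp (-ε * t) * (‖S'‖ + ε * ‖S t‖) := by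
        rw [norm_smul, norm_of_nonneg (exp_pos _).le]
        gcongr
        exact (norm_sub_le _ _).trans_eq (by rw [norm_smul, norm_of_nonneg hε])
    _ ≤ exp (-ε * t) * (B + ε * B) := by gcongr
    _ = (1 + ε) * B * exp (-ε * t) := by ring

end ExponentialDecay

theorem conformal_class_gauge_decay_general
    (ε : ℝ) (hε : 0 < ε)
    (σT : Matrix (Fin 2) (Fin 2) ℝ) (hσT : σT.PosDef)
    (σ : ℝ → Matrix (Fin 2) (Fin 2) ℝ)
    (hσpos : ∀ t, (σ t).PosDef)
    (hσdiff : Differentiable ℝ σ)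
    (S : ℝ → Matrix (Fin 2) (Fin 2) ℝ) (hSdiff : Differentiable ℝ S)
    (hinv : ∀ t, (σ t)⁻¹ = σT⁻¹ + Real.exp (-ε * t) • S t)
    (B : ℝ) (hS : ∀ t, ‖S t‖ ≤ B) (hS' : ∀ t, ‖deriv S t‖ ≤ B) :
    Filter.Tendsto σ Filter.atTop (nhds σT) ∧
    ∃ C T' : ℝ, ∀ t ≥ T',
      |Matrix.trace ((σ t)⁻¹ * deriv σ t)| ≤ C * Real.exp (-ε * t) := by
  have hdet : ∀ t, IsUnit (σ t).det := fun t => (hσpos t).det_pos.ne'.isUnit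
  have hlim : Tendsto σ atTop (𝓝 σT) := by
    refine tendsto_of_tendsto_nonsing_inv hσT.det_pos.ne'.isUnit hdet ?_
    have h := (tendsto_exp_neg_mul_smul_of_bounded hε hS).const_add σT⁻¹
    rw [add_zero] at h
    rwa [funext hinv]
  refine ⟨hlim, ?_⟩
  obtain ⟨T', hT'⟩ :=
    eventually_atTop.mp (hlim.norm.eventually (eventually_le_nhds (lt_add_one ‖σT‖)))
  refine ⟨(Fintype.card (Fin 2) : ℝ) ^ 2 * ((1 + ε) * B) * (‖σT‖ + 1), T', fun t ht => ?_⟩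
  set G' := exp (-ε * t) • (deriv S t - ε • S t)
  have hσinv : HasDerivAt (fun s => (σ s)⁻¹) G' t := by
    rw [funext hinv]
    exact (hasDerivAt_exp_neg_mul_smul (hSdiff t).hasDerivAt).const_add σT⁻¹
  have hψ : (σ t)⁻¹ * deriv σ t = -(G' * σ t) :=
    mul_eq_neg_of_hasDerivAt_of_mul_eq_one (hσdiff t).hasDerivAt hσinv
      fun s => nonsing_inv_mul _ (hdet s)
  rw [hψ, trace_neg, abs_neg, ← Real.norm_eq_abs]
  calc _ ≤ _ := norm_trace_mul_le _ _
    _ ≤ (Fintype.card (Fin 2) : ℝ) ^ 2 * ((1 + ε) * B * exp (-ε * t) * (‖σT‖ + 1)) := by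
      have hB : 0 ≤ B := (norm_nonneg _).trans (hS 0)
      gcongr
      exacts [norm_exp_neg_mul_smul_sub_le hε.le (hS' t) (hS t), hT' t ht]
    _ = _ := by ring

/-- if σ⁻¹(t) = σ̃⁻¹ + e^{-εt} S(t) with S, ∂_t S bounded, then
σ(t) → σ̃ and ψ = tr(σ⁻¹ ∂_t σ) decays like e^{-εt}. -/
theorem conformal_class_gauge_decay
    (ε : ℝ) (hε : 0 < ε)
    (σT : Matrix (Fin 2) (Fin 2) ℝ) (hσT : σT.PosDef) (hσTsymm : σT.IsSymm)
    (σ : ℝ → Matrix (Fin 2) (Fin 2) ℝ)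
    (hσpos : ∀ t, (σ t).PosDef) (hσsymm : ∀ t, (σ t).IsSymm)
    (hσdiff : Differentiable ℝ σ)
    (S : ℝ → Matrix (Fin 2) (Fin 2) ℝ) (hSdiff : Differentiable ℝ S)
    (hinv : ∀ t, (σ t)⁻¹ = σT⁻¹ + Real.exp (-ε * t) • S t)
    (B : ℝ) (hS : ∀ t, ‖S t‖ ≤ B) (hS' : ∀ t, ‖deriv S t‖ ≤ B) :
    Filter.Tendsto σ Filter.atTop (nhds σT) ∧
    ∃ C T' : ℝ, ∀ t ≥ T',
      |Matrix.trace ((σ t)⁻¹ * deriv σ t)| ≤ C * Real.exp (-ε * t) :=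
  conformal_class_gauge_decay_general ε hε σT hσT σ hσpos hσdiff S hSdiff hinv B hS hS'
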